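/- Let k and k̃ be integers with 2 ≤ k < k̃. Then there is no ℂ-algebra isomorphism from ℂ[x,y]/(x⁴, y·(y + x)·(y + k̃·x)) to ℂ[x,y]/(x⁴, y·(y + x)·(y + k·x)) mapping the ℂ-span of the classes of x and y onto the ℂ-span of the classes of x and y. In particular, these rings for k = 2, 3, 4, … are pairwise non-isomorphic in this sense. -/

import Mathlib

noncomputable section

open MvPolynomial

/-- The relations ideal for `ℂ[x,y]/(x⁴, (y+l₁·x)(y+l₂·x)(y+l₃·x))`. -/
def Crel (l : Fin 3 → ℤ) : Ideal (MvPolynomial (Fin 2) ℂ) :=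
  Ideal.span {X 0 ^ 4, ∏ i : Fin 3, (X 1 + (l i : ℂ) • X 0)}

/-- `CR l = ℂ[x,y]/(x⁴, (y+l₁·x)(y+l₂·x)(y+l₃·x))`. -/
abbrev CR (l : Fin 3 → ℤ) := MvPolynomial (Fin 2) ℂ ⧸ Crel l

/-- The class of `x` in `CR l`. -/
def cx (l : Fin 3 → ℤ) : CR l := Ideal.Quotient.mk (Crel l) (X 0)

/-- The class of `y` in `CR l`. -/
def cy (l : Fin 3 → ℤ) : CR l := Ideal.Quotient.mk (Crel l) (X 1)

/-- The `ℂ`-span of the classes of `x` and `y` (the degree-2 part). -/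
def cdeg2 (l : Fin 3 → ℤ) : Submodule ℂ (CR l) := Submodule.span ℂ {cx l, cy l}

/-!
An isomorphism `φ` preserving the span of `x, y` acts there by `φ x = a x + b y`,
`φ y = c x + d y`. Since `x⁴ = 0`, also `(a x + b y)⁴ = 0` in the target; there the coefficients of
`x³y` and `x²y²` in this fourth power are two binary quartics in `(a, b)` whose resultant is
positive, so `b = 0`, and injectivity of `φ` gives `a, d ≠ 0`. Next, `φ` carries the cubic relation
of the source to `∏_{m ∈ {0,1,k̃}} ((c + m a) x + d y) = 0`. The target's cubic vanishes on the lines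
`y = -r x`, `r ∈ {0, 1, k}`, and restricting to them shows that each `r d` equals some `c + m a`.
Comparing the three resulting equations gives `k (m₁ - m₀) = m₂ - m₀` with `mᵢ ∈ {0, 1, k̃}` and
`m₁ ≠ m₀`, which is impossible for `2 ≤ k < k̃`.
-/

theorem ne_zero_of_injective_of_triangular {K V W : Type*} [Field K] [AddCommGroup V]
    [Module K V] [AddCommGroup W] [Module K W] {f : V →ₗ[K] W} (hf : Function.Injective f)
    {x y : V} (hxy : LinearIndependent K ![x, y]) {u v : W} {a c d : K} (hx : f x = a • u)
    (hy : f y = c • u + d • v) : a ≠ 0 ∧ d ≠ 0 := by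
  have ha : a ≠ 0 := by
    rintro rfl
    exact hxy.ne_zero 0 (hf (by simpa using hx))
  refine ⟨ha, ?_⟩
  rintro rfl
  have : (-c) • x + a • y = 0 := hf <| by
    simp only [map_add, map_smul, hx, hy, map_zero, zero_smul, add_zero, smul_smul]
    rw [neg_mul, neg_smul, mul_comm, neg_add_cancel]
  exact ha (LinearIndependent.pair_iff.1 hxy (-c) a this).2

lemma eq_zero_of_quartic_coeffs_eq_zero (n : ℤ) {a b : ℂ}
    (h₁ : 4 * a ^ 3 * b - 4 * n * a * b ^ 3 + n * (n + 1) * b ^ 4 = 0)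
    (h₂ : 6 * a ^ 2 * b ^ 2 - 4 * (n + 1) * a * b ^ 3 + (n ^ 2 + n + 1) * b ^ 4 = 0) :
    b = 0 := by
  set A : ℤ := (n + 1) * (4 * n ^ 2 - 5 * n + 4) with hA
  set B : ℤ := 10 * (n ^ 2 - n + 1) with hB
  set R : ℤ := 6 * A ^ 2 - 4 * (n + 1) * A * B + (n ^ 2 + n + 1) * B ^ 2 with hR
  -- `hlin` is the remainder of `h₁` by `h₂` as polynomials in `a`; eliminating `a` once more
  -- leaves the resultant `R`.
  have hlin : (B : ℂ) * a * b ^ 4 - A * b ^ 5 = 0 := by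
    rw [hA, hB]; push_cast
    linear_combination 9 * b * h₁ - (6 * a + 4 * (n + 1) * b) * h₂
  have hres : (R : ℂ) * b ^ 10 = 0 := by
    rw [hR]; push_cast
    linear_combination (B : ℂ) ^ 2 * b ^ 6 * h₂
      - (6 * (B * a * b ^ 4 - A * b ^ 5) + (12 * A - 4 * (n + 1) * B) * b ^ 5) * hlin
  have hB_pos : 0 < B := by nlinarith [sq_nonneg (2 * n - 1)]
  have hR_pos : 0 < R := by
    have : 6 * R = (6 * A - 2 * (n + 1) * B) ^ 2 + 2 * (n ^ 2 - n + 1) * B ^ 2 := by ring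
    nlinarith [sq_nonneg (6 * A - 2 * (n + 1) * B), sq_nonneg (2 * n - 1)]
  exact pow_eq_zero_iff (by norm_num) |>.1 <|
    (mul_eq_zero.1 hres).resolve_left (by exact_mod_cast hR_pos.ne')

lemma mul_sub_ne_sub_of_lt (k kt : ℤ) (hk : 2 ≤ k) (hkkt : k < kt) (i₀ i₁ i₂ : Fin 3)
    (hne : (![0, 1, kt] i₁ : ℤ) ≠ ![0, 1, kt] i₀) :
    k * (![0, 1, kt] i₁ - ![0, 1, kt] i₀) ≠ ![0, 1, kt] i₂ - ![0, 1, kt] i₀ := by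
  fin_cases i₀ <;> fin_cases i₁ <;> fin_cases i₂ <;>
    simp only [Fin.zero_eta, Fin.mk_one, Fin.reduceFinMk, Matrix.cons_val_zero,
      Matrix.cons_val_one, Matrix.cons_val_two, Matrix.head_cons, Matrix.tail_cons, ne_eq,
      not_true_eq_false] at hne ⊢ <;>
    intro h <;> nlinarith

theorem not_forall_exists_add_mul_eq_mul (k kt : ℤ) (hk : 2 ≤ k) (hkkt : k < kt) {a c d : ℂ}
    (ha : a ≠ 0) (hd : d ≠ 0) :
    ¬ ∀ j, ∃ i, c + (![0, 1, kt] i : ℂ) * a = (![0, 1, k] j : ℂ) * d := by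
  intro h
  obtain ⟨i₀, h₀⟩ := h 0
  obtain ⟨i₁, h₁⟩ := h 1
  obtain ⟨i₂, h₂⟩ := h 2
  set m : Fin 3 → ℤ := ![0, 1, kt]
  simp only [Matrix.cons_val_zero, Matrix.cons_val_one, Matrix.cons_val_two, Matrix.head_cons,
    Matrix.tail_cons, Int.cast_zero, Int.cast_one, zero_mul, one_mul] at h₀ h₁ h₂
  have hne : m i₁ ≠ m i₀ := fun hm => hd <| by
    rw [← h₁]; linear_combination h₀ + (by exact_mod_cast hm : (m i₁ : ℂ) = m i₀) * a
  refine mul_sub_ne_sub_of_lt k kt hk hkkt i₀ i₁ i₂ hne ?_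
  have : ((k * (m i₁ - m i₀) : ℤ) : ℂ) * a = ((m i₂ - m i₀ : ℤ) : ℂ) * a := by
    push_cast; linear_combination k * (h₁ - h₀) - (h₂ - h₀)
  exact_mod_cast mul_right_cancel₀ ha this

abbrev Trunc4 := AdjoinRoot (Polynomial.X ^ 4 : Polynomial ℂ)

namespace Trunc4

def ε : Trunc4 := AdjoinRoot.root _

lemma ε_pow_four : ε ^ 4 = 0 := by
  rw [ε, ← AdjoinRoot.mk_X, ← map_pow, AdjoinRoot.mk_self]

lemma ε_pow_ne_zero {n : ℕ} (hn : n < 4) : ε ^ n ≠ 0 := by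
  rw [ε, ← AdjoinRoot.mk_X, ← map_pow, Ne, AdjoinRoot.mk_eq_zero, Polynomial.X_pow_dvd_iff]
  intro h
  simpa using h n hn

lemma ε_ne_zero : ε ≠ 0 := by simpa using ε_pow_ne_zero (n := 1) (by norm_num)

instance : Nontrivial Trunc4 := nontrivial_of_ne ε 0 ε_ne_zero

end Trunc4

open Trunc4

namespace CR

variable {l : Fin 3 → ℤ}

lemma cx_pow_four (l : Fin 3 → ℤ) : cx l ^ 4 = 0 := by
  rw [cx, ← map_pow, Ideal.Quotient.eq_zero_iff_mem]
  exact Ideal.subset_span (by simp)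

lemma prod_cy_add_smul_cx (l : Fin 3 → ℤ) : ∏ i, (cy l + (l i : ℂ) • cx l) = 0 := by
  have h : Ideal.Quotient.mkₐ ℂ (Crel l) (∏ i, (X 1 + (l i : ℂ) • X 0)) = 0 :=
    Ideal.Quotient.eq_zero_iff_mem.2 (Ideal.subset_span (by simp))
  simp only [map_prod, map_add, map_smul, Ideal.Quotient.mkₐ_eq_mk] at h
  exact h

section lift

variable {A : Type*} [CommRing A] [Algebra ℂ A]

def lift (l : Fin 3 → ℤ) (s t : A) (hs : s ^ 4 = 0) (ht : ∏ i, (t + (l i : ℂ) • s) = 0) :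
    CR l →ₐ[ℂ] A :=
  Ideal.Quotient.liftₐ (Crel l) (aeval ![s, t]) fun p hp => RingHom.mem_ker.1 <|
    (Ideal.span_le (I := RingHom.ker (aeval ![s, t]))).2
      (by rintro _ (rfl | rfl) <;> simp [hs, ht]) hp

variable {s t : A} {hs : s ^ 4 = 0} {ht : ∏ i, (t + (l i : ℂ) • s) = 0}

@[simp] lemma lift_cx : lift l s t hs ht (cx l) = s := by
  show aeval ![s, t] (X 0) = s
  simp

@[simp] lemma lift_cy : lift l s t hs ht (cy l) = t := by
  show aeval ![s, t] (X 1) = t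
  simp

end lift

/-- Restriction to the line `y = -l j • x`, on which the cubic relation vanishes. -/
def evalRoot (l : Fin 3 → ℤ) (j : Fin 3) : CR l →ₐ[ℂ] Trunc4 :=
  lift l ε (-(l j : ℂ) • ε) ε_pow_four (Finset.prod_eq_zero (Finset.mem_univ j) (by simp))

lemma evalRoot_smul_cx_add_smul_cy (j : Fin 3) (p d : ℂ) :
    evalRoot l j (p • cx l + d • cy l) = (p - l j * d) • ε := by
  simp only [evalRoot, map_add, map_smul, lift_cx, lift_cy, smul_smul, ← add_smul]
  ring_nf

theorem exists_eq_mul_of_prod_eq_zero {p : Fin 3 → ℂ} {d : ℂ}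
    (h : ∏ i, (p i • cx l + d • cy l) = 0) (j : Fin 3) : ∃ i, p i = l j * d := by
  simpa only [map_prod, evalRoot_smul_cx_add_smul_cy, Finset.prod_smul, Finset.prod_const,
    Finset.card_univ, Fintype.card_fin, map_zero, smul_eq_zero, or_false, sub_eq_zero,
    ε_pow_ne_zero (n := 3) (by norm_num), Finset.prod_eq_zero_iff, Finset.mem_univ, true_and]
    using congrArg (evalRoot l j) h

theorem linearIndependent_cx_cy {i j : Fin 3} (hij : l i ≠ l j) :
    LinearIndependent ℂ ![cx l, cy l] := by
  refine LinearIndependent.pair_iff.2 fun s t hst => ?_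
  have hi := congrArg (evalRoot l i) hst
  have hj := congrArg (evalRoot l j) hst
  simp only [evalRoot_smul_cx_add_smul_cy, map_zero, smul_eq_zero, ε_ne_zero, or_false,
    sub_eq_zero] at hi hj
  have ht : t = 0 := by
    have : t * (l i - l j : ℂ) = 0 := by linear_combination hj - hi
    exact (mul_eq_zero.1 this).resolve_right (sub_ne_zero.2 (by exact_mod_cast hij))
  exact ⟨by simpa [ht] using hi, ht⟩

def cubic (l : Fin 3 → ℤ) : Polynomial Trunc4 :=
  ∏ i : Fin 3, (Polynomial.X + Polynomial.C ((l i : ℂ) • ε))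

lemma cubic_monic : (cubic l).Monic :=
  Polynomial.monic_prod_of_monic _ _ fun _ _ => Polynomial.monic_X_add_C _

lemma degree_cubic : (cubic l).degree = 3 := by
  rw [Polynomial.degree_eq_natDegree cubic_monic.ne_zero, cubic,
    Polynomial.natDegree_prod_of_monic _ _ fun _ _ => Polynomial.monic_X_add_C _]
  simp

/-- `CR l` presented as `Trunc4[y] ⧸ (∏ i, (y + l i • ε))`: free over `Trunc4` with basis `1, y, y²`,
so coefficients can be read off. -/
abbrev Model (l : Fin 3 → ℤ) := AdjoinRoot (cubic l)

def toModel (l : Fin 3 → ℤ) : CR l →ₐ[ℂ] Model l :=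
  lift l (algebraMap Trunc4 _ ε) (AdjoinRoot.root _) (by rw [← map_pow, ε_pow_four, map_zero]) (by
    have h : AdjoinRoot.mk (cubic l) (∏ i : Fin 3, (Polynomial.X + Polynomial.C ((l i : ℂ) • ε))) =
        0 := AdjoinRoot.mk_self
    simpa only [map_prod, map_add, AdjoinRoot.mk_X, AdjoinRoot.mk_C, Algebra.smul_def,
      map_mul, ← AdjoinRoot.algebraMap_eq, ← IsScalarTower.algebraMap_apply] using h)

@[simp] lemma toModel_cx : toModel l (cx l) = algebraMap Trunc4 (Model l) ε := lift_cx

@[simp] lemma toModel_cy : toModel l (cy l) = AdjoinRoot.root (cubic l) := lift_cy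

lemma Model.eq_zero_of_smul_add_smul_eq_zero {α β : ℂ}
    (h : α • (algebraMap Trunc4 (Model l) ε ^ 3 * AdjoinRoot.root _) +
      β • (algebraMap Trunc4 (Model l) ε ^ 2 * AdjoinRoot.root _ ^ 2) = 0) : α = 0 ∧ β = 0 := by
  set p : Polynomial Trunc4 :=
    Polynomial.C (α • ε ^ 3) * Polynomial.X + Polynomial.C (β • ε ^ 2) * Polynomial.X ^ 2
  have hp : AdjoinRoot.mk (cubic l) p = 0 := by
    simpa only [p, map_add, map_mul, map_pow, AdjoinRoot.mk_X, AdjoinRoot.mk_C, Algebra.smul_def,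
      ← AdjoinRoot.algebraMap_eq, ← IsScalarTower.algebraMap_apply, mul_assoc] using h
  have hp0 : p = 0 := by
    by_contra hp0
    refine AdjoinRoot.mk_ne_zero_of_degree_lt cubic_monic hp0 ?_ hp
    have : p.degree ≤ 2 := by simp only [p]; compute_degree
    exact degree_cubic ▸ this.trans_lt (by norm_num)
  have h₁ := congrArg (Polynomial.coeff · 1) hp0
  have h₂ := congrArg (Polynomial.coeff · 2) hp0
  exact ⟨by simpa [p, ε_pow_ne_zero] using h₁, by simpa [p, ε_pow_ne_zero] using h₂⟩

theorem eq_zero_of_smul_cx_add_smul_cy_pow_four_eq_zero (n : ℤ) {a b : ℂ}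
    (h : (a • cx ![0, 1, n] + b • cy ![0, 1, n]) ^ 4 = 0) : b = 0 := by
  set e := algebraMap Trunc4 (Model ![0, 1, n]) ε
  set y := AdjoinRoot.root (cubic ![0, 1, n])
  have he : e ^ 4 = 0 := by rw [← map_pow, ε_pow_four, map_zero]
  have hy : y * (y + e) * (y + (n : ℂ) • e) = 0 := by
    simpa [Fin.prod_univ_three, -AdjoinRoot.algebraMap_eq] using
      congrArg (toModel _) (prod_cy_add_smul_cx ![0, 1, n])
  have hq : (a • e + b • y) ^ 4 = 0 := by
    simpa [-AdjoinRoot.algebraMap_eq] using congrArg (toModel _) h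
  -- reducing with `e⁴ = 0` and `hy`, only the monomials `e³y` and `e²y²` survive
  obtain ⟨h₁, h₂⟩ := Model.eq_zero_of_smul_add_smul_eq_zero (l := ![0, 1, n])
    (α := 4 * a ^ 3 * b - 4 * n * a * b ^ 3 + n * (n + 1) * b ^ 4)
    (β := 6 * a ^ 2 * b ^ 2 - 4 * (n + 1) * a * b ^ 3 + (n ^ 2 + n + 1) * b ^ 4) (by
      simp only [Algebra.smul_def, map_add, map_sub, map_mul, map_pow, map_ofNat, map_intCast,
        map_one] at hy hq ⊢
      linear_combination hq - algebraMap ℂ _ a ^ 4 * he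
        - (4 * algebraMap ℂ _ a * algebraMap ℂ _ b ^ 3 * e + algebraMap ℂ _ b ^ 4 * y
          - (1 + (n : Model ![0, 1, n])) * algebraMap ℂ _ b ^ 4 * e) * hy)
  exact eq_zero_of_quartic_coeffs_eq_zero n h₁ h₂

end CR

/-- For integers `2 ≤ k < k̃` there is no `ℂ`-algebra isomorphism from
`ℂ[x,y]/(x⁴, y(y+x)(y+k̃·x))` to `ℂ[x,y]/(x⁴, y(y+x)(y+k·x))` mapping the span of
`x, y` onto the span of `x, y`. -/
theorem stmt14 (k kt : ℤ) (hk : 2 ≤ k) (hkkt : k < kt) :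
    ¬ ∃ φ : CR ![0, 1, kt] ≃ₐ[ℂ] CR ![0, 1, k],
        Submodule.map φ.toLinearMap (cdeg2 ![0, 1, kt]) = cdeg2 ![0, 1, k] := by
  rintro ⟨φ, hφ⟩
  have hmem : ∀ z ∈ cdeg2 ![0, 1, kt], φ z ∈ cdeg2 ![0, 1, k] :=
    fun z hz => hφ ▸ Submodule.mem_map_of_mem hz
  obtain ⟨a, b, hx⟩ :=
    Submodule.mem_span_pair.1 (hmem _ (Submodule.subset_span (Set.mem_insert _ _)))
  obtain ⟨c, d, hy⟩ :=
    Submodule.mem_span_pair.1 (hmem _ (Submodule.subset_span (Set.mem_insert_of_mem _ rfl)))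
  obtain rfl : b = 0 := CR.eq_zero_of_smul_cx_add_smul_cy_pow_four_eq_zero k <| by
    rw [hx, ← map_pow, CR.cx_pow_four, map_zero]
  rw [zero_smul, add_zero] at hx
  obtain ⟨ha, hd⟩ := ne_zero_of_injective_of_triangular (f := φ.toLinearMap) φ.injective
    (CR.linearIndependent_cx_cy (i := 0) (j := 1) (by simp)) hx.symm hy.symm
  refine not_forall_exists_add_mul_eq_mul k kt hk hkkt (c := c) ha hd fun j =>
    CR.exists_eq_mul_of_prod_eq_zero ?_ j
  have h := congrArg φ (CR.prod_cy_add_smul_cx ![0, 1, kt])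
  rw [map_prod, map_zero] at h
  refine (Finset.prod_congr rfl fun i _ => ?_).trans h
  rw [map_add, map_smul, ← hx, ← hy, smul_smul, add_smul]
  abel
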